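/- If AF_k > 1 − (k/(k-1))·AA_k + 1/(k-1), then there is a contradiction given accuracies in [0,1]; equivalently, the region {(AA, AF) : AF > 1 − (k/(k-1))·AA + 1/(k-1)} is unreachable by any accuracy matrix with entries in [0,1]. -/

import Mathlib

theorem stmt_13 (k : ℕ) (hk : 2 ≤ k) (a : ℕ → ℕ → ℝ)
    (ha : ∀ l j, a l j ∈ Set.Icc (0:ℝ) 1)
    (AA AF : ℝ)
    (hAA : AA = (1/(k:ℝ)) * ∑ j ∈ Finset.Icc 1 k, a k j)
    (hAF : AF = (1/((k:ℝ)-1)) * ∑ j ∈ Finset.Icc 1 (k-1),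
        ((Finset.Icc 1 (k-1)).sup' (Finset.nonempty_Icc.mpr (by omega)) (fun l => a l j) - a k j)) :
    ¬ (AF > 1 - ((k:ℝ)/((k:ℝ)-1)) * AA + 1/((k:ℝ)-1)) := by
  push_neg
  have hk2 : (2:ℝ) ≤ (k:ℝ) := by exact_mod_cast hk
  have hc : (0:ℝ) < (k:ℝ) - 1 := by linarith
  have hkpos : (0:ℝ) < (k:ℝ) := by linarith
  have hsplit : ∑ j ∈ Finset.Icc 1 k, a k j = (∑ j ∈ Finset.Icc 1 (k-1), a k j) + a k k := by
    have h : Finset.Icc 1 k = insert k (Finset.Icc 1 (k-1)) := by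
      ext x; simp only [Finset.mem_Icc, Finset.mem_insert]; omega
    rw [h, Finset.sum_insert (by simp only [Finset.mem_Icc]; omega), add_comm]
  have hcard : ((Finset.Icc 1 (k-1)).card : ℝ) = (k:ℝ) - 1 := by
    rw [Nat.card_Icc]
    have : k - 1 + 1 - 1 = k - 1 := by omega
    rw [this]
    push_cast [Nat.cast_sub (by omega : 1 ≤ k)]
    ring
  have hsum : ∑ j ∈ Finset.Icc 1 (k-1),
      ((Finset.Icc 1 (k-1)).sup' (Finset.nonempty_Icc.mpr (by omega)) (fun l => a l j) - a k j)
      ≤ ∑ j ∈ Finset.Icc 1 (k-1), (1 - a k j) := by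
    apply Finset.sum_le_sum
    intro j hj
    have hsup : (Finset.Icc 1 (k-1)).sup' (Finset.nonempty_Icc.mpr (by omega)) (fun l => a l j) ≤ 1 :=
      Finset.sup'_le _ _ (fun l _ => (ha l j).2)
    linarith
  have hrw : ∑ j ∈ Finset.Icc 1 (k-1), (1 - a k j)
      = ((k:ℝ) - 1) - ∑ j ∈ Finset.Icc 1 (k-1), a k j := by
    rw [Finset.sum_sub_distrib, Finset.sum_const, nsmul_eq_mul, hcard, mul_one]
  set S := ∑ j ∈ Finset.Icc 1 (k-1), a k j with hS
  have hAF' : AF ≤ (1/((k:ℝ)-1)) * (((k:ℝ) - 1) - S) := by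
    rw [hAF]
    apply mul_le_mul_of_nonneg_left _ (by positivity)
    rw [← hrw]; exact hsum
  have hAA' : AA = (1/(k:ℝ)) * (S + a k k) := by rw [hAA, hsplit]
  have hak : a k k ≤ 1 := (ha k k).2
  rw [hAA']
  have h1 : (1:ℝ) - ((k:ℝ)/((k:ℝ)-1)) * ((1/(k:ℝ)) * (S + a k k)) + 1/((k:ℝ)-1)
      = 1 + (1 - a k k)/((k:ℝ)-1) - S/((k:ℝ)-1) := by
    field_simp
    ring
  rw [h1]
  have h2 : (1/((k:ℝ)-1)) * (((k:ℝ) - 1) - S) = 1 - S/((k:ℝ)-1) := by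
    field_simp
  have h3 : (0:ℝ) ≤ (1 - a k k)/((k:ℝ)-1) := div_nonneg (by linarith) (by linarith)
  linarith [hAF', h2.symm ▸ hAF']
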